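/- arXiv:1607.04976 — 2 statements merged into one kernel-verified Lean document; each statement's English description precedes it below -/
import Mathlib

section
/- Let C ⊆ ℂ be a closed set, and let u : ℂ → ℂ be continuous on the closed unit disk and analytic on the open unit disk, with u(frontier of the unit disk) ⊆ C. Then for every unbounded connected component U of ℂ \ C, the image u(open unit disk) is disjoint from U. -/
/-- A holomorphic disk whose boundary lies in a closed set `C` is disjoint
from every unbounded connected component of the complement of `C`. -/
theorem holomorphic_disk_avoids_unbounded_components
    (C : Set ℂ) (hC : IsClosed C) (u : ℂ → ℂ)
    (hcont : ContinuousOn u (Metric.closedBall 0 1))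
    (hdiff : ∀ z ∈ Metric.ball (0 : ℂ) 1, DifferentiableAt ℂ u z)
    (hbdry : u '' Metric.sphere (0 : ℂ) 1 ⊆ C)
    (U : Set ℂ) (hU : ∃ z ∈ Cᶜ, U = connectedComponentIn Cᶜ z)
    (hUunbounded : ¬ Bornology.IsBounded U) :
    Disjoint (u '' Metric.ball (0 : ℂ) 1) U := by
  obtain ⟨z₀, hz₀, rfl⟩ := hU
  set B := Metric.ball (0 : ℂ) 1
  set Bc := Metric.closedBall (0 : ℂ) 1
  have hBc : IsCompact Bc := isCompact_closedBall 0 1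
  have hBsub : B ⊆ Bc := Metric.ball_subset_closedBall
  have hBopen : IsOpen B := Metric.isOpen_ball
  have hUsub : connectedComponentIn Cᶜ z₀ ⊆ Cᶜ := connectedComponentIn_subset _ _
  have hUconn : IsPreconnected (connectedComponentIn Cᶜ z₀) :=
    (isPreconnected_connectedComponentIn)
  -- image of closed ball is compact
  have hKcomp : IsCompact (u '' Bc) := hBc.image_of_continuousOn hcont
  -- analytic on the ball
  have hdo : DifferentiableOn ℂ u B := fun z hz => (hdiff z hz).differentiableWithinAt
  have hanal : AnalyticOnNhd ℂ u B := hdo.analyticOnNhd hBopen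
  rcases hanal.is_constant_or_isOpen (convex_ball (0:ℂ) 1).isPreconnected with
    ⟨w, hw⟩ | hopen
  · -- constant case: u ≡ w on ball, hence w ∈ C by continuity, image ⊆ C
    have hsphere : ∀ x ∈ Metric.sphere (0 : ℂ) 1, u x = w := by
      intro x hx
      have hxBc : x ∈ Bc := Metric.sphere_subset_closedBall hx
      have hxcl : x ∈ closure B := by
        rw [closure_ball (0 : ℂ) one_ne_zero]; exact hxBc
      have h1 : Filter.Tendsto u (nhdsWithin x B) (nhds (u x)) :=
        ((hcont x hxBc).mono hBsub).tendsto
      have h2 : Filter.Tendsto u (nhdsWithin x B) (nhds w) := by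
        refine Filter.Tendsto.congr' ?_ tendsto_const_nhds
        filter_upwards [self_mem_nhdsWithin] with z hz using (hw z hz).symm
      have : (nhdsWithin x B).NeBot := mem_closure_iff_nhdsWithin_neBot.mp hxcl
      exact tendsto_nhds_unique h1 h2
    have hwC : w ∈ C := by
      have : u 1 = w := hsphere 1 (by simp)
      have h1 : u 1 ∈ C := hbdry ⟨1, by simp, rfl⟩
      rwa [this] at h1
    rw [Set.disjoint_left]
    rintro a ⟨z, hz, rfl⟩ haU
    exact hUsub haU (by rw [hw z hz]; exact hwC)
  · -- open case
    have hSopen : IsOpen (u '' B) := hopen B le_rfl hBopen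
    -- U ∩ closure (u '' B) ⊆ u '' B
    have hkey : connectedComponentIn Cᶜ z₀ ⊆ u '' B ∪ (closure (u '' B))ᶜ := by
      intro a ha
      by_cases hacl : a ∈ closure (u '' B)
      · left
        have haK : a ∈ u '' Bc := by
          have : closure (u '' B) ⊆ u '' Bc :=
            closure_minimal (Set.image_mono hBsub) hKcomp.isClosed
          exact this hacl
        obtain ⟨z, hzBc, rfl⟩ := haK
        rcases lt_or_eq_of_le (Metric.mem_closedBall.mp hzBc) with hlt | heq
        · exact ⟨z, Metric.mem_ball.mpr hlt, rfl⟩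
        · exfalso
          have : u z ∈ C := hbdry ⟨z, by simpa [Metric.mem_sphere] using heq, rfl⟩
          exact hUsub ha this
      · right; exact hacl
    have := hUconn.subset_or_subset hSopen (isOpen_compl_iff.mpr isClosed_closure)
      (Set.disjoint_left.mpr fun a h hc => hc (subset_closure h)) hkey
    rcases this with h | h
    · exfalso
      apply hUunbounded
      exact hKcomp.isBounded.subset (h.trans (Set.image_mono hBsub))
    · rw [Set.disjoint_left]
      intro a haS haU
      exact h haU (subset_closure haS)
end

section
/- Let C ⊆ ℂ be a closed set and let u : ℂ → ℂ be continuous on the closed unit disk, analytic on the open unit disk, with u(unit circle) ⊆ C. Then u(closed unit disk) ⊆ C ∪ (the union of the bounded connected components of ℂ \ C). Equivalently, the image of u avoids every unbounded connected component of the complement of C. -/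
/-- Filled-in boundedness: a holomorphic disk whose boundary lies in a closed
set `C` has image contained in `C` together with the bounded connected
components of the complement of `C`. -/
theorem holomorphic_disk_image_subset_filled_set
    (C : Set ℂ) (hC : IsClosed C) (u : ℂ → ℂ)
    (hcont : ContinuousOn u (Metric.closedBall 0 1))
    (hdiff : ∀ z ∈ Metric.ball (0 : ℂ) 1, DifferentiableAt ℂ u z)
    (hbdry : u '' Metric.sphere (0 : ℂ) 1 ⊆ C) :
    u '' Metric.closedBall (0 : ℂ) 1 ⊆
      C ∪ {z : ℂ | z ∉ C ∧ Bornology.IsBounded (connectedComponentIn Cᶜ z)} := by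
  rintro _ ⟨z, hz, rfl⟩
  by_contra hmem
  simp only [Set.mem_union, Set.mem_setOf_eq, not_or, not_and] at hmem
  obtain ⟨huzC, hKunb⟩ := hmem
  have hKunb := hKunb huzC
  -- `z` is in the open ball, since boundary values lie in `C`.
  have hzball : z ∈ Metric.ball (0 : ℂ) 1 := by
    rcases lt_or_eq_of_le (Metric.mem_closedBall.mp hz) with h | h
    · exact Metric.mem_ball.mpr h
    · exact absurd (hbdry ⟨z, Metric.mem_sphere.mpr h, rfl⟩) huzC
  -- the image of the closed disk is compact, hence bounded
  have hScompact : IsCompact (u '' Metric.closedBall (0 : ℂ) 1) :=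
    (isCompact_closedBall _ _).image_of_continuousOn hcont
  set S := u '' Metric.closedBall (0 : ℂ) 1 with hS
  obtain ⟨r, hr⟩ := hScompact.isBounded.subset_closedBall 0
  -- pick a point of the component outside `S`
  set K := connectedComponentIn Cᶜ (u z) with hK
  have huzK : u z ∈ K := mem_connectedComponentIn huzC
  have hKsub : K ⊆ Cᶜ := connectedComponentIn_subset _ _
  obtain ⟨p, hpK, hpr⟩ : ∃ p ∈ K, p ∉ Metric.closedBall (0 : ℂ) r := by
    by_contra h
    push_neg at h
    exact hKunb ((Metric.isBounded_closedBall).subset h)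
  have hpS : p ∉ S := fun h => hpr (hr h)
  -- analyticity
  have hanal : AnalyticOnNhd ℂ u (Metric.ball 0 1) :=
    (DifferentiableOn.analyticOnNhd
      (fun w hw => (hdiff w hw).differentiableWithinAt) Metric.isOpen_ball)
  rcases hanal.is_constant_or_isOpen (convex_ball (0:ℂ) 1).isPreconnected with ⟨w, hw⟩ | hopen
  · -- constant case: u ≡ w on the ball, and w ∈ C by continuity up to the boundary
    have h1 : (1 : ℂ) ∈ Metric.sphere (0 : ℂ) 1 := by simp
    have h1cl : (1 : ℂ) ∈ closure (Metric.ball (0 : ℂ) 1) := by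
      rw [closure_ball (0:ℂ) one_ne_zero]; simp
    have htend : Filter.Tendsto u (nhdsWithin 1 (Metric.ball (0:ℂ) 1)) (nhds (u 1)) :=
      ((hcont 1 (by simpa using Metric.sphere_subset_closedBall h1)).mono
        Metric.ball_subset_closedBall)
    have htend' : Filter.Tendsto u (nhdsWithin 1 (Metric.ball (0:ℂ) 1)) (nhds w) := by
      refine Filter.Tendsto.congr' ?_ tendsto_const_nhds
      filter_upwards [self_mem_nhdsWithin] with x hx using (hw x hx).symm
    have hne : (nhdsWithin 1 (Metric.ball (0:ℂ) 1)).NeBot :=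
      mem_closure_iff_nhdsWithin_neBot.mp h1cl
    have hu1w : u 1 = w := tendsto_nhds_unique htend htend'
    have : u z = w := hw z hzball
    exact huzC (this ▸ hu1w ▸ hbdry ⟨1, h1, rfl⟩)
  · -- open case
    have hUopen : IsOpen (u '' Metric.ball (0:ℂ) 1) :=
      hopen _ le_rfl Metric.isOpen_ball
    have hVopen : IsOpen Sᶜ := hScompact.isClosed.isOpen_compl
    have hKpre : IsPreconnected K := (isPreconnected_connectedComponentIn)
    have hcover : K ⊆ u '' Metric.ball (0:ℂ) 1 ∪ Sᶜ := by
      intro q hq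
      by_cases hqS : q ∈ S
      · left
        obtain ⟨w', hw', rfl⟩ := hqS
        have : w' ∈ Metric.ball (0:ℂ) 1 := by
          rcases lt_or_eq_of_le (Metric.mem_closedBall.mp hw') with h | h
          · exact Metric.mem_ball.mpr h
          · exact absurd (hbdry ⟨w', Metric.mem_sphere.mpr h, rfl⟩) (hKsub hq)
        exact ⟨w', this, rfl⟩
      · exact Or.inr hqS
    have h1 : (K ∩ u '' Metric.ball (0:ℂ) 1).Nonempty :=
      ⟨u z, huzK, ⟨z, hzball, rfl⟩⟩
    have h2 : (K ∩ Sᶜ).Nonempty := ⟨p, hpK, hpS⟩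
    obtain ⟨q, hqK, hqU, hqV⟩ := hKpre _ _ hUopen hVopen hcover h1 h2
    exact hqV (Set.image_mono Metric.ball_subset_closedBall hqU)
end
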